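/- arXiv:1810.05522 — 4 statements merged into one kernel-verified Lean document; each statement's English description precedes it below -/
import Mathlib

section
/- Let ρ = Σ_{α=1}^n λ_α |ξ_α^1⟩⟨ξ_α^1| ⊗ ⋯ ⊗ |ξ_α^N⟩⟨ξ_α^N| where all λ_α > 0 and each ξ_α^j ∈ ℂ^d is a unit vector. If ρ is permutationally symmetric, i.e. ρ = P_S ρ P_S, then |ξ_α^i⟩⟨ξ_α^i| = |ξ_α^j⟩⟨ξ_α^j| for every α = 1,…,n and all 1 ≤ i, j ≤ N. -/
open scoped BigOperators ComplexConjugate ComplexOrder Matrix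
noncomputable section
open MeasureTheory

namespace DSym

/-- Index set of the computational basis of `(ℂ^d)^{⊗N}`. -/
abbrev Idx (d N : ℕ) := Fin N → Fin d

/-- `|i| = i_1 + ⋯ + i_N`. -/
def wsum {d N : ℕ} (i : Idx d N) : ℕ := ∑ j, (i j : ℕ)

/-- `C(N,k)_d = #{i ∈ {0,…,d−1}^N : |i| = k}`. -/
def Ccount (d N k : ℕ) : ℕ := (Finset.univ.filter (fun i : Idx d N => wsum i = k)).card

/-- The D-symmetrizator `P_D`. -/
def PD (d N : ℕ) : Matrix (Idx d N) (Idx d N) ℂ :=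
  Matrix.of fun i j => if wsum i = wsum j then ((Ccount d N (wsum j) : ℂ))⁻¹ else 0

/-- The symmetrizator `P_S`. -/
def PS (d N : ℕ) : Matrix (Idx d N) (Idx d N) ℂ :=
  Matrix.of fun i j =>
    ((N.factorial : ℂ))⁻¹ *
      ((Finset.univ.filter (fun σ : Equiv.Perm (Fin N) => i = fun k => j (σ k))).card : ℂ)

/-- The product state `|ξ^1⟩⟨ξ^1| ⊗ ⋯ ⊗ |ξ^N⟩⟨ξ^N|` as a matrix. -/
def prodProj {d N : ℕ} (ξ : Fin N → (Fin d → ℂ)) : Matrix (Idx d N) (Idx d N) ℂ :=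
  Matrix.of fun i i' => ∏ j, ξ j (i j) * conj (ξ j (i' j))

/-- Full separability of a multipartite state. -/
def FullySep {d N : ℕ} (ρ : Matrix (Idx d N) (Idx d N) ℂ) : Prop :=
  ∃ (n : ℕ) (lam : Fin n → ℝ) (ξ : Fin n → Fin N → (Fin d → ℂ)),
    (∀ α, 0 < lam α) ∧ (∀ α j, ∑ x, Complex.normSq (ξ α j x) = 1) ∧
      ρ = ∑ α, (lam α : ℂ) • prodProj (ξ α)

/-- The restricted Dicke vector `|R_{N,d;k}⟩`. -/
def Rvec (d N k : ℕ) : Idx d N → ℂ := fun i => if wsum i = k then 1 else 0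

/-- The rank-one operator `|R_{N,d;k}⟩⟨R_{N,d;k}|`. -/
def RProj (d N k : ℕ) : Matrix (Idx d N) (Idx d N) ℂ :=
  Matrix.vecMulVec (Rvec d N k) (star (Rvec d N k))

/-- Diagonal restricted Dicke state with coefficients `p`. -/
def dickeDiag (d N : ℕ) (p : ℕ → ℝ) : Matrix (Idx d N) (Idx d N) ℂ :=
  ∑ k ∈ Finset.range (N * (d - 1) + 1), (p k : ℂ) • RProj d N k

/-- Partial transposition of the first `m` tensor factors (entrywise). -/
def Gamma {d N : ℕ} (m : ℕ) (ρ : Matrix (Idx d N) (Idx d N) ℂ) :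
    Matrix (Idx d N) (Idx d N) ℂ :=
  Matrix.of fun i j =>
    ρ (fun k => if (k : ℕ) < m then j k else i k) (fun k => if (k : ℕ) < m then i k else j k)

/-- D-symmetry of a state: `ρ = P_D ρ P_D`. -/
def IsDSymm {d N : ℕ} (ρ : Matrix (Idx d N) (Idx d N) ℂ) : Prop :=
  ρ = PD d N * ρ * PD d N

/-- A pure fully separable D-symmetric state `σ = (|ξ⟩⟨ξ|)^{⊗N}`, `ξ` a unit vector. -/
def PureDSymmProd {d N : ℕ} (σ : Matrix (Idx d N) (Idx d N) ℂ) : Prop :=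
  ∃ ξ : Fin d → ℂ,
    (∑ x, Complex.normSq (ξ x) = 1) ∧ σ = prodProj (fun _ : Fin N => ξ) ∧ IsDSymm σ

/-- Entanglement witness for the D-symmetric system. -/
def IsDWitness {d N : ℕ} (W : Matrix (Idx d N) (Idx d N) ℂ) : Prop :=
  W.IsHermitian ∧ W = PD d N * W * PD d N ∧
    ∀ σ : Matrix (Idx d N) (Idx d N) ℂ, PureDSymmProd σ → 0 ≤ (W * σ).trace

/-- The dual restricted Dicke vector. -/
def Rtilde (d N k : ℕ) : Idx d N → ℂ := ((Ccount d N k : ℂ))⁻¹ • Rvec d N k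

/-- Solution of the generalized moment problem on `[0,∞)`. -/
def IsGenMomentSolution (n : ℕ) (p : ℕ → ℝ) : Prop :=
  ∃ (σ : Measure ℝ) (M : ℝ), IsFiniteMeasure σ ∧ σ {x | x < 0} = 0 ∧
    (∀ k ≤ n, Integrable (fun t => t ^ k) σ) ∧ 0 ≤ M ∧
    (∀ k < n, p k = ∫ t, t ^ k ∂σ) ∧ p n = (∫ t, t ^ n ∂σ) + M

/-- Solution of the strict moment problem on `[0,∞)`. -/
def IsStrictMomentSolution (n : ℕ) (p : ℕ → ℝ) : Prop :=
  ∃ σ : Measure ℝ, IsFiniteMeasure σ ∧ σ {x | x < 0} = 0 ∧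
    (∀ k ≤ n, Integrable (fun t => t ^ k) σ) ∧ (∀ k ≤ n, p k = ∫ t, t ^ k ∂σ)


/-- The normalization constant `C_z = (Σ_{i=0}^{d−1} |z|^{2i})^{−1/2}`. -/
def Cz (d : ℕ) (z : ℂ) : ℝ := (∑ j ∈ Finset.range d, ‖z‖ ^ (2 * j)) ^ (-(1/2 : ℝ))

/-- The vector `ζ_z = C_z Σ_{i=0}^{d−1} z^i |i⟩`. -/
def zeta (d : ℕ) (z : ℂ) : Fin d → ℂ := fun i => (Cz d z : ℂ) * z ^ (i : ℕ)

/-- The basis vector `|d−1⟩`. -/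
def topVec (d : ℕ) : Fin d → ℂ := fun x => if (x : ℕ) = d - 1 then 1 else 0

/-- Sum of the first `m` coordinates of a tuple. -/
def wsumFirst {d N : ℕ} (m : ℕ) (i : Idx d N) : ℕ :=
  ∑ j ∈ Finset.univ.filter (fun j : Fin N => (j : ℕ) < m), (i j : ℕ)

/-- Sum of the last `N − m` coordinates of a tuple. -/
def wsumLast {d N : ℕ} (m : ℕ) (i : Idx d N) : ℕ :=
  ∑ j ∈ Finset.univ.filter (fun j : Fin N => m ≤ (j : ℕ)), (i j : ℕ)

/-- The vector `|R_{m,d;a}⟩ ⊗ |R_{N−m,d;b}⟩`, viewed inside `(ℂ^d)^{⊗N}`. -/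
def splitVec (d N m : ℕ) (a b : ℤ) : Idx d N → ℂ :=
  fun i => if (wsumFirst m i : ℤ) = a ∧ (wsumLast m i : ℤ) = b then 1 else 0

/-- The operator `A_s` from the decomposition of `Γ_m(ρ)`. -/
def Amat (d N m : ℕ) (p : ℕ → ℝ) (s : ℤ) : Matrix (Idx d N) (Idx d N) ℂ :=
  ∑ k ∈ Finset.Icc (max 0 (-s)) (min ((m : ℤ) * ((d : ℤ) - 1)) ((((N : ℤ) - (m : ℤ)) * ((d : ℤ) - 1)) - s)),
  ∑ l ∈ Finset.Icc (max 0 (-s)) (min ((m : ℤ) * ((d : ℤ) - 1)) ((((N : ℤ) - (m : ℤ)) * ((d : ℤ) - 1)) - s)),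
    (p (k + l + s).toNat : ℂ) •
      Matrix.vecMulVec (splitVec d N m k (k + s)) (star (splitVec d N m l (l + s)))

/-- The permutation unitary `F_σ`, `F_σ|ξ_1,…,ξ_N⟩ = |ξ_{σ⁻¹(1)},…,ξ_{σ⁻¹(N)}⟩`. -/
def Fmat (d N : ℕ) (σ : Equiv.Perm (Fin N)) : Matrix (Idx d N) (Idx d N) ℂ :=
  Matrix.of fun x i => if x = fun k => i (σ.symm k) then 1 else 0

/-- Partial transposition with respect to the binary string `b`. -/
def partialT {d N : ℕ} (b : Fin N → Bool) (ρ : Matrix (Idx d N) (Idx d N) ℂ) :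
    Matrix (Idx d N) (Idx d N) ℂ :=
  Matrix.of fun i j => ρ (fun k => if b k then j k else i k) (fun k => if b k then i k else j k)

end DSym
end

/-!
Permuting the tensor factors of the row index leaves `P_S`, hence every `ρ = P_S ρ P_S`,
unchanged; so for each permutation `σ` the twisted trace `∑ₓ ρ(x ∘ σ, x)` equals
`tr ρ = ∑ λ_α`. On a product state the twisted trace factorises into overlaps
`∏ₘ ⟨ξ^m, ξ^{σ⁻¹ m}⟩`, which for the transposition `σ = (i j)` is `|⟨ξ^i, ξ^j⟩|² ≤ 1`. The
weights being positive, every `|⟨ξ_α^i, ξ_α^j⟩| = 1`, and equality in Cauchy–Schwarz makes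
`ξ_α^j` a phase multiple of `ξ_α^i`.
-/

namespace DSym

open Matrix

section UnitVectors

variable {ι : Type*} [Fintype ι] {a b : ι → ℂ}

lemma norm_toLp_eq_one (ha : ∑ x, Complex.normSq (a x) = 1) :
    ‖WithLp.toLp 2 a‖ = 1 := by
  simp [EuclideanSpace.norm_eq, Complex.sq_norm, ha]

lemma dotProduct_star_self_eq_one (ha : ∑ x, Complex.normSq (a x) = 1) :
    a ⬝ᵥ star a = 1 := by
  calc a ⬝ᵥ star a = inner ℂ (WithLp.toLp 2 a) (WithLp.toLp 2 a) := rfl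
    _ = 1 := by rw [inner_self_eq_norm_sq_to_K, norm_toLp_eq_one ha]; simp

lemma normSq_dotProduct_star_le_one (ha : ∑ x, Complex.normSq (a x) = 1)
    (hb : ∑ x, Complex.normSq (b x) = 1) : Complex.normSq (b ⬝ᵥ star a) ≤ 1 := by
  have := norm_inner_le_norm (𝕜 := ℂ) (WithLp.toLp 2 a) (WithLp.toLp 2 b)
  rw [norm_toLp_eq_one ha, norm_toLp_eq_one hb, one_mul] at this
  rw [Complex.normSq_eq_norm_sq]
  exact pow_le_one₀ (norm_nonneg _) this

lemma vecMulVec_star_eq_of_normSq_dotProduct_star_eq_one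
    (ha : ∑ x, Complex.normSq (a x) = 1) (hb : ∑ x, Complex.normSq (b x) = 1)
    (h : Complex.normSq (b ⬝ᵥ star a) = 1) :
    vecMulVec a (star a) = vecMulVec b (star b) := by
  have ha0 : WithLp.toLp 2 a ≠ 0 := ne_zero_of_norm_ne_zero (by simp [norm_toLp_eq_one ha])
  have hb0 : WithLp.toLp 2 b ≠ 0 := ne_zero_of_norm_ne_zero (by simp [norm_toLp_eq_one hb])
  have hnorm : ‖inner ℂ (WithLp.toLp 2 a) (WithLp.toLp 2 b)‖ =
      ‖WithLp.toLp 2 a‖ * ‖WithLp.toLp 2 b‖ := by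
    rw [norm_toLp_eq_one ha, norm_toLp_eq_one hb, one_mul, Complex.norm_def]
    simp [EuclideanSpace.inner_toLp_toLp, h]
  obtain ⟨r, -, hr⟩ := (norm_inner_eq_norm_iff ha0 hb0).mp hnorm
  have hba : b = r • a := congrArg WithLp.ofLp hr
  have hr : r * star r = 1 := by
    simpa [hba, dotProduct_star_self_eq_one ha, mul_comm, mul_left_comm] using
      dotProduct_star_self_eq_one hb
  rw [hba, star_smul, smul_vecMulVec, vecMulVec_smul, smul_smul, hr, one_smul]

end UnitVectors

variable {d N : ℕ}

lemma PS_apply_comp_perm (σ : Equiv.Perm (Fin N)) (i j : Idx d N) :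
    PS d N (fun k => i (σ k)) j = PS d N i j := by
  simp only [PS, of_apply]
  congr 2
  refine Finset.card_equiv (Equiv.mulRight σ⁻¹) fun τ => ?_
  simp only [Finset.mem_filter, Finset.mem_univ, true_and, Equiv.coe_mulRight, funext_iff]
  constructor
  · intro h k
    simpa using h (σ⁻¹ k)
  · intro h k
    simpa using h (σ k)

lemma apply_comp_perm_of_eq_PS_mul_mul {ρ : Matrix (Idx d N) (Idx d N) ℂ}
    (hsym : ρ = PS d N * ρ * PS d N) (σ : Equiv.Perm (Fin N)) (i j : Idx d N) :
    ρ (fun k => i (σ k)) j = ρ i j := by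
  rw [hsym]
  simp only [mul_apply, PS_apply_comp_perm]

lemma sum_prodProj_apply_comp_perm (ξ : Fin N → Fin d → ℂ) (σ : Equiv.Perm (Fin N)) :
    ∑ i : Idx d N, prodProj ξ (fun k => i (σ k)) i = ∏ m, ξ (σ⁻¹ m) ⬝ᵥ star (ξ m) := by
  have hcomp (i : Idx d N) : ∏ k, ξ k (i (σ k)) = ∏ m, ξ (σ⁻¹ m) (i m) := by
    rw [← Equiv.prod_comp σ fun m => ξ (σ⁻¹ m) (i m)]
    simp
  simp only [prodProj, of_apply, Finset.prod_mul_distrib, hcomp]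
  simp only [← Finset.prod_mul_distrib]
  exact (Fintype.prod_sum fun m x => ξ (σ⁻¹ m) x * star (ξ m x)).symm

lemma prod_dotProduct_star_swap {ξ : Fin N → Fin d → ℂ}
    (hξ : ∀ j, ∑ x, Complex.normSq (ξ j x) = 1) {i j : Fin N} (hij : i ≠ j) :
    ∏ m, ξ ((Equiv.swap i j)⁻¹ m) ⬝ᵥ star (ξ m) = Complex.normSq (ξ j ⬝ᵥ star (ξ i)) := by
  rw [Fintype.prod_eq_mul i j hij fun m hm => by
    simp [Equiv.swap_apply_of_ne_of_ne hm.1 hm.2, dotProduct_star_self_eq_one (hξ m)]]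
  simp [Equiv.swap_inv, ← Complex.mul_conj, dotProduct_star (ξ i)]

theorem stmt2_general (d N : ℕ) (n : ℕ)
    (lam : Fin n → ℝ) (ξ : Fin n → Fin N → (Fin d → ℂ))
    (hlam : ∀ α, 0 < lam α) (hunit : ∀ α j, ∑ x, Complex.normSq (ξ α j x) = 1)
    (ρ : Matrix (Idx d N) (Idx d N) ℂ)
    (hρ : ρ = ∑ α, (lam α : ℂ) • prodProj (ξ α))
    (hsym : ρ = PS d N * ρ * PS d N) :
    ∀ (α : Fin n) (i j : Fin N),
      Matrix.vecMulVec (ξ α i) (star (ξ α i)) = Matrix.vecMulVec (ξ α j) (star (ξ α j)) := by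
  intro α i j
  rcases eq_or_ne i j with rfl | hij
  · rfl
  have htwist (σ : Equiv.Perm (Fin N)) : ∑ x : Idx d N, ρ (fun k => x (σ k)) x =
      ∑ β, (lam β : ℂ) * ∏ m, ξ β (σ⁻¹ m) ⬝ᵥ star (ξ β m) := by
    rw [hρ]
    simp only [Matrix.sum_apply, Matrix.smul_apply, smul_eq_mul]
    rw [Finset.sum_comm]
    simp only [← Finset.mul_sum, sum_prodProj_apply_comp_perm]
  have hswap : ∑ β, lam β * Complex.normSq (ξ β j ⬝ᵥ star (ξ β i)) = ∑ β, lam β := by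
    have h := (htwist (Equiv.swap i j)).symm.trans <| (Finset.sum_congr rfl fun x _ =>
      apply_comp_perm_of_eq_PS_mul_mul hsym (Equiv.swap i j) x x).trans (htwist 1)
    simp only [prod_dotProduct_star_swap (hunit _) hij, inv_one, Equiv.Perm.coe_one, id,
      dotProduct_star_self_eq_one (hunit _ _), Finset.prod_const_one, mul_one] at h
    exact_mod_cast h
  have hle (β) (_ : β ∈ Finset.univ) :
      lam β * Complex.normSq (ξ β j ⬝ᵥ star (ξ β i)) ≤ lam β :=
    mul_le_of_le_one_right (hlam β).le (normSq_dotProduct_star_le_one (hunit β i) (hunit β j))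
  have hα := (Finset.sum_eq_sum_iff_of_le hle).mp hswap α (Finset.mem_univ α)
  exact vecMulVec_star_eq_of_normSq_dotProduct_star_eq_one (hunit α i) (hunit α j)
    ((mul_eq_left₀ (hlam α).ne').mp hα)

theorem stmt2 (d N : ℕ) (hd : 2 ≤ d) (hN : 2 ≤ N) (n : ℕ)
    (lam : Fin n → ℝ) (ξ : Fin n → Fin N → (Fin d → ℂ))
    (hlam : ∀ α, 0 < lam α) (hunit : ∀ α j, ∑ x, Complex.normSq (ξ α j x) = 1)
    (ρ : Matrix (Idx d N) (Idx d N) ℂ)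
    (hρ : ρ = ∑ α, (lam α : ℂ) • prodProj (ξ α))
    (hsym : ρ = PS d N * ρ * PS d N) :
    ∀ (α : Fin n) (i j : Fin N),
      Matrix.vecMulVec (ξ α i) (star (ξ α i)) = Matrix.vecMulVec (ξ α j) (star (ξ α j)) :=
  stmt2_general d N n lam ξ hlam hunit ρ hρ hsym

end DSym
end

section
/- Let ρ = Σ_{α=1}^n λ_α (|ξ_α⟩⟨ξ_α|)^{⊗N} where all λ_α > 0 and each ξ_α ∈ ℂ^d is a unit vector. If ρ is D-symmetric, i.e. ρ = P_D ρ P_D, then for each α either |ξ_α⟩⟨ξ_α| = |d−1⟩⟨d−1|, or there exists z ∈ ℂ such that |ξ_α⟩⟨ξ_α| = |ζ_z⟩⟨ζ_z|, where ζ_z = C_z Σ_{i=0}^{d−1} z^i |i⟩ and C_z = (Σ_{i=0}^{d−1} |z|^{2i})^{−1/2}. -/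
open scoped BigOperators ComplexConjugate ComplexOrder Matrix
/-!
A D-symmetric `ρ` has entries depending only on the weights `|i|`, `|j|`. Writing
`ρ = ∑ λ_α v_α v_α^*` with `v_α = ξ_α^{⊗N}`, the quantity
`∑ λ_α |v_α(i) - v_α(i')|² = ρ_{ii} + ρ_{i'i'} - ρ_{ii'} - ρ_{i'i}` vanishes when
`|i| = |i'|`, so every `ξ_α^{⊗N}` is constant on weight levels. Comparing `(a, b, t₀, …, t₀)` with
`(c, e, t₀, …, t₀)` for a coordinate `ξ_{t₀} ≠ 0` gives `ξ_a ξ_b = ξ_c ξ_e` whenever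
`a + b = c + e`. If `ξ_0 ≠ 0` this makes `ξ` geometric, `ξ_i = ξ_0 z^i`; if `ξ_0 = 0` then
`ξ_{t+1}² = ξ_t ξ_{t+2}` kills every coordinate but the last. Either way `ξ` is a unimodular
multiple of `ζ_z` or of `|d-1⟩`, which fixes `|ξ⟩⟨ξ|`.
-/

namespace DSym

open Matrix

section RankOne

variable {ι : Type*}

theorem vecMulVec_star_eq_of_eq_smul [Fintype ι] {ξ η : ι → ℂ} {u : ℂ}
    (hξ : ∑ x, Complex.normSq (ξ x) = 1) (hη : ∑ x, Complex.normSq (η x) = 1)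
    (h : ξ = u • η) : vecMulVec ξ (star ξ) = vecMulVec η (star η) := by
  have hu : u * conj u = 1 := by
    have : Complex.normSq u = 1 := by
      simpa only [h, Pi.smul_apply, smul_eq_mul, Complex.normSq_mul, ← Finset.mul_sum, hη,
        mul_one] using hξ
    rw [Complex.mul_conj, this, Complex.ofReal_one]
  ext i j
  simp only [h, vecMulVec_apply, Pi.star_apply, Pi.smul_apply, smul_eq_mul, RCLike.star_def,
    map_mul]
  linear_combination (η i * conj (η j)) * hu

theorem eq_of_sum_smul_vecMulVec_apply_eq {κ : Type*} [Fintype κ] (lam : κ → ℝ)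
    (hlam : ∀ β, 0 < lam β) (v : κ → ι → ℂ) {i i' : ι}
    (h : (∑ β, (lam β : ℂ) • vecMulVec (v β) (star (v β))) i i'
      + (∑ β, (lam β : ℂ) • vecMulVec (v β) (star (v β))) i' i
      = (∑ β, (lam β : ℂ) • vecMulVec (v β) (star (v β))) i i
      + (∑ β, (lam β : ℂ) • vecMulVec (v β) (star (v β))) i' i') (β : κ) :
    v β i = v β i' := by
  have hsum : ∑ β, lam β * Complex.normSq (v β i - v β i') = 0 := by
    apply Complex.ofReal_injective
    push_cast
    simp only [Matrix.sum_apply, Matrix.smul_apply, vecMulVec_apply, Pi.star_apply,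
      RCLike.star_def, smul_eq_mul, ← Finset.sum_add_distrib] at h
    calc ∑ β, (lam β : ℂ) * Complex.normSq (v β i - v β i')
        = ∑ β, (lam β : ℂ) * (v β i * conj (v β i) + v β i' * conj (v β i'))
          - ∑ β, (lam β : ℂ) * (v β i * conj (v β i') + v β i' * conj (v β i)) := by
          rw [← Finset.sum_sub_distrib]
          refine Finset.sum_congr rfl fun β _ => ?_
          rw [← Complex.mul_conj, map_sub]
          ring
      _ = 0 := by simp only [mul_add, h, sub_self]
  have hβ := (Finset.sum_eq_zero_iff_of_nonneg fun β _ =>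
    mul_nonneg (hlam β).le (Complex.normSq_nonneg _)).mp hsum β (Finset.mem_univ β)
  rw [mul_eq_zero, Complex.normSq_eq_zero, sub_eq_zero] at hβ
  exact hβ.resolve_left (hlam β).ne'

end RankOne

theorem IsDSymm.apply_congr {d N : ℕ} {ρ : Matrix (Idx d N) (Idx d N) ℂ} (hD : IsDSymm ρ)
    {a b a' b' : Idx d N} (ha : wsum a = wsum a') (hb : wsum b = wsum b') :
    ρ a b = ρ a' b' := by
  rw [hD]
  simp only [mul_apply, PD, of_apply, ha, hb]

def tensorPow {d : ℕ} (N : ℕ) (ξ : Fin d → ℂ) : Idx d N → ℂ := fun i => ∏ j, ξ (i j)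

theorem prodProj_const {d N : ℕ} (ξ : Fin d → ℂ) :
    prodProj (fun _ : Fin N => ξ) = vecMulVec (tensorPow N ξ) (star (tensorPow N ξ)) := by
  ext i i'
  simp [prodProj, tensorPow, vecMulVec_apply, Finset.prod_mul_distrib]

theorem tensorPow_eq_of_wsum_eq {d N n : ℕ} {lam : Fin n → ℝ} (hlam : ∀ α, 0 < lam α)
    {ξ : Fin n → Fin d → ℂ}
    (hD : IsDSymm (∑ α, (lam α : ℂ) • prodProj (fun _ : Fin N => ξ α)))
    (α : Fin n) {i i' : Idx d N} (h : wsum i = wsum i') :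
    tensorPow N (ξ α) i = tensorPow N (ξ α) i' := by
  simp only [prodProj_const] at hD
  refine eq_of_sum_smul_vecMulVec_apply_eq lam hlam (fun α => tensorPow N (ξ α)) ?_ α
  rw [hD.apply_congr rfl h.symm, hD.apply_congr h.symm rfl, hD.apply_congr h.symm h.symm]

theorem mul_eq_mul_of_tensorPow_eq {d N : ℕ} (hN : 2 ≤ N) {ξ : Fin d → ℂ} {t₀ : Fin d}
    (ht₀ : ξ t₀ ≠ 0)
    (hξ : ∀ i i' : Idx d N, wsum i = wsum i' → tensorPow N ξ i = tensorPow N ξ i')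
    {a b c e : Fin d} (h : (a : ℕ) + b = c + e) : ξ a * ξ b = ξ c * ξ e := by
  obtain ⟨M, rfl⟩ := Nat.exists_eq_add_of_le' hN
  have := hξ (Fin.cons a (Fin.cons b fun _ => t₀)) (Fin.cons c (Fin.cons e fun _ => t₀))
    (by simp only [wsum, Fin.sum_univ_succ, Fin.cons_zero, Fin.cons_succ]; omega)
  simp only [tensorPow, Fin.prod_univ_succ, Fin.cons_zero, Fin.cons_succ, ← mul_assoc] at this
  exact mul_right_cancel₀ (Finset.prod_ne_zero_iff.mpr fun _ _ => ht₀) this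

section Recurrence

variable {g : ℕ → ℂ} {d : ℕ}

theorem eq_zero_of_mul_self_eq_mul
    (hg : ∀ t, t + 2 < d → g (t + 1) * g (t + 1) = g t * g (t + 2)) (h0 : g 0 = 0) :
    ∀ t, t + 1 < d → g t = 0
  | 0, _ => h0
  | t + 1, ht => by
    have := hg t ht
    rwa [eq_zero_of_mul_self_eq_mul hg h0 t (by omega), zero_mul, mul_self_eq_zero] at this

theorem eq_mul_pow_of_mul_eq_mul (hg : ∀ t, t + 1 < d → g 0 * g (t + 1) = g 1 * g t)
    (h0 : g 0 ≠ 0) : ∀ t, t < d → g t = g 0 * (g 1 / g 0) ^ t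
  | 0, _ => by simp
  | t + 1, ht => by
    have := hg t ht
    rw [eq_mul_pow_of_mul_eq_mul hg h0 t (by omega)] at this
    refine mul_left_cancel₀ h0 (this.trans ?_)
    have hz : g 0 * (g 1 / g 0) = g 1 := mul_div_cancel₀ _ h0
    linear_combination (-(g 0 * (g 1 / g 0) ^ t)) * hz

end Recurrence

theorem sum_normSq_topVec {d : ℕ} (hd : 0 < d) : ∑ x, Complex.normSq (topVec d x) = 1 := by
  rw [Finset.sum_eq_single ⟨d - 1, by omega⟩]
  · simp [topVec]
  · intro x _ hx
    simp [topVec, Fin.ext_iff.not.mp hx]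
  · simp

theorem sum_normSq_zeta {d : ℕ} (hd : 0 < d) (z : ℂ) :
    ∑ x, Complex.normSq (zeta d z x) = 1 := by
  set S := ∑ j ∈ Finset.range d, ‖z‖ ^ (2 * j)
  have hS : 0 < S := Finset.sum_pos' (fun j _ => by positivity) ⟨0, by simpa using hd, by simp⟩
  have hCz : Cz d z ^ 2 = S⁻¹ := by
    rw [Cz, ← Real.rpow_natCast, ← Real.rpow_mul hS.le]
    norm_num [Real.rpow_neg_one]
  calc ∑ x : Fin d, Complex.normSq (zeta d z x) = Cz d z ^ 2 * S := by
        rw [Finset.mul_sum, ← Fin.sum_univ_eq_sum_range (fun j => Cz d z ^ 2 * ‖z‖ ^ (2 * j))]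
        refine Finset.sum_congr rfl fun x _ => ?_
        simp [zeta, Complex.normSq_eq_norm_sq, mul_pow, ← pow_mul, mul_comm]
    _ = 1 := by rw [hCz, inv_mul_cancel₀ hS.ne']

theorem vecMulVec_star_eq_topVec_or_zeta {d : ℕ} {ξ : Fin d → ℂ}
    (hunit : ∑ x, Complex.normSq (ξ x) = 1)
    (hξ : ∀ a b c e : Fin d, (a : ℕ) + b = c + e → ξ a * ξ b = ξ c * ξ e) :
    vecMulVec ξ (star ξ) = vecMulVec (topVec d) (star (topVec d)) ∨
      ∃ z : ℂ, vecMulVec ξ (star ξ) = vecMulVec (zeta d z) (star (zeta d z)) := by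
  have hd : 0 < d := Nat.pos_of_ne_zero (by rintro rfl; simp at hunit)
  set g : ℕ → ℂ := fun t => if h : t < d then ξ ⟨t, h⟩ else 0
  have hξg : ∀ i : Fin d, ξ i = g i := fun i => by simp [g]
  have hg : ∀ a b c e, a < d → b < d → c < d → e < d → a + b = c + e →
      g a * g b = g c * g e := by
    intro a b c e ha hb hc he h
    simpa [g, ha, hb, hc, he] using hξ ⟨a, ha⟩ ⟨b, hb⟩ ⟨c, hc⟩ ⟨e, he⟩ h
  by_cases h0 : g 0 = 0
  · left
    have hg0 := eq_zero_of_mul_self_eq_mul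
      (fun t ht => hg _ _ _ _ (by omega) (by omega) (by omega) ht (by omega)) h0
    refine vecMulVec_star_eq_of_eq_smul hunit (sum_normSq_topVec hd)
      (u := ξ ⟨d - 1, by omega⟩) ?_
    funext i
    by_cases hi : (i : ℕ) = d - 1
    · simpa [topVec, hi] using congrArg ξ (Fin.ext hi)
    · simp [topVec, hi, hξg, hg0 i (by omega)]
  · right
    have hC : (Cz d (g 1 / g 0) : ℂ) ≠ 0 := fun h => by
      simpa [zeta, h] using sum_normSq_zeta hd (g 1 / g 0)
    refine ⟨g 1 / g 0, vecMulVec_star_eq_of_eq_smul hunit (sum_normSq_zeta hd _)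
      (u := g 0 / Cz d (g 1 / g 0)) ?_⟩
    funext i
    rw [hξg, eq_mul_pow_of_mul_eq_mul
      (fun t ht => hg _ _ _ _ (by omega) (by omega) (by omega) (by omega) (by omega)) h0 i i.isLt]
    simp only [zeta, Pi.smul_apply, smul_eq_mul]
    field_simp

theorem stmt3_general (d N : ℕ) (hN : 2 ≤ N) (n : ℕ)
    (lam : Fin n → ℝ) (ξ : Fin n → (Fin d → ℂ))
    (hlam : ∀ α, 0 < lam α) (hunit : ∀ α, ∑ x, Complex.normSq (ξ α x) = 1)
    (ρ : Matrix (Idx d N) (Idx d N) ℂ)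
    (hρ : ρ = ∑ α, (lam α : ℂ) • prodProj (fun _ : Fin N => ξ α))
    (hD : ρ = PD d N * ρ * PD d N) :
    ∀ α : Fin n,
      Matrix.vecMulVec (ξ α) (star (ξ α)) = Matrix.vecMulVec (topVec d) (star (topVec d)) ∨
      ∃ z : ℂ, Matrix.vecMulVec (ξ α) (star (ξ α))
        = Matrix.vecMulVec (zeta d z) (star (zeta d z)) := by
  intro α
  subst hρ
  obtain ⟨t₀, -, ht₀⟩ := Finset.exists_ne_zero_of_sum_ne_zero (hunit α ▸ one_ne_zero)
  refine vecMulVec_star_eq_topVec_or_zeta (hunit α) fun a b c e h => ?_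
  exact mul_eq_mul_of_tensorPow_eq hN (Complex.normSq_eq_zero.not.mp ht₀)
    (fun i i' => tensorPow_eq_of_wsum_eq hlam hD α) h

theorem stmt3 (d N : ℕ) (hd : 2 ≤ d) (hN : 2 ≤ N) (n : ℕ)
    (lam : Fin n → ℝ) (ξ : Fin n → (Fin d → ℂ))
    (hlam : ∀ α, 0 < lam α) (hunit : ∀ α, ∑ x, Complex.normSq (ξ α x) = 1)
    (ρ : Matrix (Idx d N) (Idx d N) ℂ)
    (hρ : ρ = ∑ α, (lam α : ℂ) • prodProj (fun _ : Fin N => ξ α))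
    (hD : ρ = PD d N * ρ * PD d N) :
    ∀ α : Fin n,
      Matrix.vecMulVec (ξ α) (star (ξ α)) = Matrix.vecMulVec (topVec d) (star (topVec d)) ∨
      ∃ z : ℂ, Matrix.vecMulVec (ξ α) (star (ξ α))
        = Matrix.vecMulVec (zeta d z) (star (zeta d z)) :=
  stmt3_general d N hN n lam ξ hlam hunit ρ hρ hD

end DSym
end

section
/- If for a finite sequence (p_k)_{k=0}^{n} of real numbers the two Hankel matrices (p_{k+l})_{k,l=0}^{⌊n/2⌋} and (p_{k+l+1})_{k,l=0}^{⌊(n−1)/2⌋} are strictly positive definite, then (p_k)_{k=0}^{n} is a solution of the strict moment problem on [0,∞), i.e. there is a finite positive Borel measure σ on [0,∞) with p_k = ∫_0^∞ t^k dσ(t) for all k = 0,…,n. -/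
open scoped BigOperators ComplexConjugate ComplexOrder Matrix
/-!
Polynomials of the form `f² + X g²` are closed under products, so peeling off linear factors at
real roots `≤ 0`, squared linear factors at positive (necessarily double) roots, and quadratic
factors at non-real roots shows that every polynomial nonnegative on `[0, ∞)` has this form; for
degree `≤ n` the degrees cannot cancel, so `2 deg f ≤ n` and `2 deg g + 1 ≤ n`. Positive
definiteness of the two Hankel matrices therefore makes the Riesz functional `L : Xᵏ ↦ p k`
strictly positive on nonzero polynomials of degree `≤ n` that are nonnegative on `[0, ∞)`.

Dually, the convex cone of vectors `(∫ tᵏ dσ)_{k ≤ n}` of finite measures `σ` on `[0, ∞)` has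
nonempty interior. If `(p₀, …, pₙ)` were not an interior point, a supporting hyperplane would be a
nonzero linear functional, i.e. a nonzero polynomial of degree `≤ n`, that is nonnegative on the
cone (hence on `[0, ∞)`, testing with Dirac measures) and has `L ≤ 0`.
-/

open Polynomial MeasureTheory

namespace Polynomial

def sqAddXMulSq : Submonoid ℝ[X] where
  carrier := {q | ∃ f g : ℝ[X], q = f ^ 2 + X * g ^ 2}
  one_mem' := ⟨1, 0, by simp⟩
  mul_mem' := by
    rintro _ _ ⟨f₁, g₁, rfl⟩ ⟨f₂, g₂, rfl⟩
    exact ⟨f₁ * f₂ + X * g₁ * g₂, f₁ * g₂ - g₁ * f₂, by ring⟩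

lemma eval_nonneg_of_mem_sqAddXMulSq {q : ℝ[X]} (hq : q ∈ sqAddXMulSq) {t : ℝ} (ht : 0 ≤ t) :
    0 ≤ q.eval t := by
  obtain ⟨f, g, rfl⟩ := hq
  simp only [eval_add, eval_mul, eval_pow, eval_X]
  positivity

lemma C_mem_sqAddXMulSq {c : ℝ} (hc : 0 ≤ c) : C c ∈ sqAddXMulSq :=
  ⟨C √c, 0, by rw [← C_pow, Real.sq_sqrt hc]; ring⟩

lemma X_sub_C_mem_sqAddXMulSq {a : ℝ} (ha : a ≤ 0) : X - C a ∈ sqAddXMulSq :=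
  ⟨C √(-a), 1, by rw [← C_pow, Real.sq_sqrt (neg_nonneg.2 ha), C_neg]; ring⟩

lemma X_sub_C_sq_mem_sqAddXMulSq (a : ℝ) : (X - C a) ^ 2 ∈ sqAddXMulSq :=
  ⟨X - C a, 0, by ring⟩

/-- With `ρ = ‖z‖ ≥ re z`, the quadratic is `(X - ρ)² + 2 (ρ - re z) X`. -/
lemma quadratic_mem_sqAddXMulSq (z : ℂ) :
    X ^ 2 - C (2 * z.re) * X + C (‖z‖ ^ 2) ∈ sqAddXMulSq := by
  have h : 0 ≤ 2 * (‖z‖ - z.re) := by linarith [Complex.re_le_norm z]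
  refine ⟨X - C ‖z‖, C √(2 * (‖z‖ - z.re)), ?_⟩
  rw [← C_pow, Real.sq_sqrt h]
  simp only [map_mul, map_sub, map_ofNat, map_pow]
  ring

lemma sq_X_sub_C_dvd_of_nonneg {q : ℝ[X]} (hq0 : q ≠ 0) (hq : ∀ t, 0 ≤ t → 0 ≤ q.eval t)
    {a : ℝ} (ha : 0 < a) (hroot : q.IsRoot a) : (X - C a) ^ 2 ∣ q := by
  have hmin : IsLocalMin (fun t => q.eval t) a := by
    filter_upwards [Ioi_mem_nhds ha] with t ht
    rw [hroot.eq_zero]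
    exact hq t ht.le
  have hderiv : q.derivative.IsRoot a := by
    simpa only [IsRoot.def, Polynomial.deriv] using hmin.deriv_eq_zero
  rw [← le_rootMultiplicity_iff hq0, Nat.succ_le_iff, one_lt_rootMultiplicity_iff_isRoot hq0]
  exact ⟨hroot, hderiv⟩

lemma exists_dvd_mem_sqAddXMulSq {q : ℝ[X]} (hq : ∀ t, 0 ≤ t → 0 ≤ q.eval t)
    (hdeg : 0 < q.natDegree) : ∃ r ∈ sqAddXMulSq, 0 < r.natDegree ∧ r ∣ q := by
  have hq0 : q ≠ 0 := by rintro rfl; simp at hdeg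
  obtain ⟨z, hz⟩ := Complex.exists_root (f := q.map (algebraMap ℝ ℂ)) (by
    rw [degree_map]; exact natDegree_pos_iff_degree_pos.1 hdeg)
  have hz' : aeval z q = 0 := by rwa [← eval_map_algebraMap]
  by_cases him : z.im = 0
  · have hroot : q.IsRoot z.re := by
      have hz_re : z = algebraMap ℝ ℂ z.re := Complex.ext (by simp) (by simp [him])
      rwa [hz_re, aeval_algebraMap_apply_eq_algebraMap_eval,
        map_eq_zero_iff _ (algebraMap ℝ ℂ).injective] at hz'
    rcases le_or_gt z.re 0 with hre | hre
    · exact ⟨X - C z.re, X_sub_C_mem_sqAddXMulSq hre, by simp, dvd_iff_isRoot.2 hroot⟩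
    · exact ⟨(X - C z.re) ^ 2, X_sub_C_sq_mem_sqAddXMulSq _, by simp,
        sq_X_sub_C_dvd_of_nonneg hq0 hq hre hroot⟩
  · have hdeg2 : (X ^ 2 - C (2 * z.re) * X + C (‖z‖ ^ 2)).natDegree = 2 := by compute_degree!
    exact ⟨_, quadratic_mem_sqAddXMulSq z, by omega,
      quadratic_dvd_of_aeval_eq_zero_im_ne_zero q hz' him⟩

/-- `q` is nonnegative wherever `r > 0`, and by continuity also at the finitely many roots. -/
lemma eval_nonneg_of_eval_mul_nonneg {r q : ℝ[X]} (hr0 : r ≠ 0)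
    (hr : ∀ t, 0 ≤ t → 0 ≤ r.eval t) (hrq : ∀ t, 0 ≤ t → 0 ≤ (r * q).eval t) {t : ℝ}
    (ht : 0 ≤ t) : 0 ≤ q.eval t := by
  have hdense : Dense {s : ℝ | r.IsRoot s}ᶜ :=
    (finite_setOfPred_isRoot hr0).countable.dense_compl ℝ
  have hsub : Set.Ioi 0 ∩ {s : ℝ | r.IsRoot s}ᶜ ⊆ {s | 0 ≤ q.eval s} := by
    rintro s ⟨hs, hrs⟩
    have hpos : 0 < r.eval s := lt_of_le_of_ne (hr s hs.le) (Ne.symm hrs)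
    have hrqs := hrq s hs.le
    rw [eval_mul] at hrqs
    exact nonneg_of_mul_nonneg_right hrqs hpos
  have hcl : Set.Ici (0 : ℝ) ⊆ closure (Set.Ioi 0 ∩ {s : ℝ | r.IsRoot s}ᶜ) := by
    rw [← closure_Ioi]
    exact closure_minimal (hdense.open_subset_closure_inter isOpen_Ioi) isClosed_closure
  exact closure_minimal hsub (isClosed_le continuous_const q.continuous) (hcl ht)

theorem mem_sqAddXMulSq_of_nonneg {q : ℝ[X]} (hq : ∀ t, 0 ≤ t → 0 ≤ q.eval t) :
    q ∈ sqAddXMulSq := by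
  induction h : q.natDegree using Nat.strong_induction_on generalizing q with
  | _ d ih =>
  rcases Nat.eq_zero_or_pos d with rfl | hd
  · rw [eq_C_of_natDegree_eq_zero h]
    exact C_mem_sqAddXMulSq (by simpa [coeff_zero_eq_eval_zero] using hq 0 le_rfl)
  · obtain ⟨r, hrS, hr, q₂, rfl⟩ := exists_dvd_mem_sqAddXMulSq hq (h ▸ hd)
    have hr0 : r ≠ 0 := by rintro rfl; simp at hr
    have hq₂0 : q₂ ≠ 0 := by rintro rfl; simp at h; omega
    rw [natDegree_mul hr0 hq₂0] at h
    exact mul_mem hrS (ih _ (by omega) (fun t ht => eval_nonneg_of_eval_mul_nonneg hr0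
      (fun _ => eval_nonneg_of_mem_sqAddXMulSq hrS) hq ht) rfl)

lemma natDegree_le_of_natDegree_sq_add_X_mul_sq_le {f g : ℝ[X]} {n : ℕ}
    (h : (f ^ 2 + X * g ^ 2).natDegree ≤ n) :
    f.natDegree ≤ n / 2 ∧ g.natDegree ≤ (n - 1) / 2 := by
  rcases eq_or_ne g 0 with rfl | hg
  · rw [zero_pow two_ne_zero, mul_zero, add_zero, natDegree_pow] at h
    exact ⟨by omega, by simp⟩
  have hXg : (X * g ^ 2).natDegree = 2 * g.natDegree + 1 := by
    rw [natDegree_mul X_ne_zero (pow_ne_zero 2 hg), natDegree_X, natDegree_pow]; ring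
  -- the two summands have degrees of different parity, so they cannot cancel
  rcases lt_or_gt_of_ne (show 2 * f.natDegree ≠ 2 * g.natDegree + 1 by omega) with hlt | hlt
  · rw [natDegree_add_eq_right_of_natDegree_lt (by rwa [natDegree_pow, hXg]), hXg] at h
    omega
  · rw [natDegree_add_eq_left_of_natDegree_lt (by rwa [natDegree_pow, hXg]), natDegree_pow] at h
    omega

end Polynomial

section MomentFunctional

variable {R : Type*} [CommSemiring R]

def hankel (p : ℕ → R) (e m : ℕ) : Matrix (Fin (m + 1)) (Fin (m + 1)) R :=
  Matrix.of fun k l => p (k + l + e)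

def momentFunctional (p : ℕ → R) : R[X] →ₗ[R] R :=
  lsum fun j => LinearMap.mulRight R (p j)

lemma momentFunctional_apply (p : ℕ → R) (q : R[X]) :
    momentFunctional p q = q.sum fun j a => a * p j :=
  rfl

lemma momentFunctional_monomial (p : ℕ → R) (j : ℕ) (a : R) :
    momentFunctional p (monomial j a) = a * p j := by
  simp [momentFunctional_apply, sum_monomial_index]

lemma eval_eq_momentFunctional (q : R[X]) (t : R) :
    q.eval t = momentFunctional (t ^ ·) q := by
  rw [momentFunctional_apply, eval_eq_sum]

lemma momentFunctional_eq_sum_degreeLTEquiv (p : ℕ → R) {N : ℕ} {q : R[X]}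
    (hq : q ∈ degreeLT R N) :
    momentFunctional p q = ∑ i, degreeLTEquiv R N ⟨q, hq⟩ i * p i :=
  (sum_fin _ (fun _ => zero_mul _) (mem_degreeLT.1 hq)).symm

lemma momentFunctional_X_pow_mul_sq (p : ℕ → R) (e : ℕ) {m : ℕ} {f : R[X]}
    (hf : f.natDegree ≤ m) :
    momentFunctional p (X ^ e * f ^ 2) =
      (fun k : Fin (m + 1) => f.coeff k) ⬝ᵥ (hankel p e m *ᵥ fun k => f.coeff k) := by
  have hf' : f = ∑ k : Fin (m + 1), monomial k (f.coeff k) := by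
    rw [Fin.sum_univ_eq_sum_range (fun k => monomial k (f.coeff k))]
    exact as_sum_range' f (m + 1) (Nat.lt_succ_of_le hf)
  conv_lhs => rw [sq, hf', Finset.sum_mul_sum, Finset.mul_sum]
  simp only [Finset.mul_sum, map_sum, X_pow_eq_monomial, monomial_mul_monomial,
    momentFunctional_monomial, dotProduct, Matrix.mulVec, hankel, Matrix.of_apply]
  refine Finset.sum_congr rfl fun k _ => Finset.sum_congr rfl fun l _ => ?_
  rw [add_comm e]
  ring

end MomentFunctional

lemma momentFunctional_X_pow_mul_sq_pos {p : ℕ → ℝ} {e m : ℕ} (hp : (hankel p e m).PosDef)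
    {f : ℝ[X]} (hf0 : f ≠ 0) (hf : f.natDegree ≤ m) :
    0 < momentFunctional p (X ^ e * f ^ 2) := by
  rw [momentFunctional_X_pow_mul_sq p e hf]
  refine hp.dotProduct_mulVec_pos fun h => hf0 ?_
  exact leadingCoeff_eq_zero.1 (congrFun h ⟨f.natDegree, Nat.lt_succ_of_le hf⟩)

lemma momentFunctional_X_pow_mul_sq_nonneg {p : ℕ → ℝ} {e m : ℕ} (hp : (hankel p e m).PosDef)
    {f : ℝ[X]} (hf : f.natDegree ≤ m) :
    0 ≤ momentFunctional p (X ^ e * f ^ 2) := by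
  rcases eq_or_ne f 0 with rfl | hf0
  · simp
  · exact (momentFunctional_X_pow_mul_sq_pos hp hf0 hf).le

theorem momentFunctional_pos_of_nonneg {n : ℕ} {p : ℕ → ℝ} (h₀ : (hankel p 0 (n / 2)).PosDef)
    (h₁ : (hankel p 1 ((n - 1) / 2)).PosDef) {q : ℝ[X]} (hq0 : q ≠ 0) (hqn : q.natDegree ≤ n)
    (hq : ∀ t, 0 ≤ t → 0 ≤ q.eval t) : 0 < momentFunctional p q := by
  obtain ⟨f, g, rfl⟩ := mem_sqAddXMulSq_of_nonneg hq
  obtain ⟨hf, hg⟩ := natDegree_le_of_natDegree_sq_add_X_mul_sq_le hqn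
  rcases eq_or_ne f 0 with rfl | hf0
  · have hg0 : g ≠ 0 := by rintro rfl; simp at hq0
    simpa using momentFunctional_X_pow_mul_sq_pos h₁ hg0 hg
  · have hF : 0 < momentFunctional p (f ^ 2) := by
      simpa using momentFunctional_X_pow_mul_sq_pos h₀ hf0 hf
    have hG : 0 ≤ momentFunctional p (X * g ^ 2) := by
      simpa using momentFunctional_X_pow_mul_sq_nonneg h₁ hg
    rw [map_add]
    exact add_pos_of_pos_of_nonneg hF hG

theorem PointedCone.mem_interior_of_pos_on_dual {E : Type*} [AddCommGroup E] [Module ℝ E]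
    [TopologicalSpace E] [IsTopologicalAddGroup E] [ContinuousSMul ℝ E] [LocallyConvexSpace ℝ E]
    (C : PointedCone ℝ E) (hC : (interior (C : Set E)).Nonempty) {x : E}
    (hx : ∀ f : StrongDual ℝ E, f ≠ 0 → (∀ y ∈ C, 0 ≤ f y) → 0 < f x) :
    x ∈ interior (C : Set E) := by
  by_contra hxC
  obtain ⟨f, hf⟩ := geometric_hahn_banach_open_point C.convex.interior isOpen_interior hxC
  have hle : ∀ y ∈ C, f y ≤ f x := fun y hy =>
    closure_minimal (fun a ha => (hf a ha).le) (isClosed_le f.continuous continuous_const)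
      (C.convex.closure_interior_eq_closure_of_nonempty_interior hC ▸ subset_closure hy)
  have hfx : 0 ≤ f x := by simpa using hle 0 C.zero_mem
  -- `f` is bounded above on the cone `C`, hence nonpositive on it
  have hdual : ∀ y ∈ C, 0 ≤ (-f) y := by
    intro y hy
    by_contra! hfy
    rw [neg_apply, neg_neg_iff_pos] at hfy
    have := hle _ (C.smul_mem (div_pos (by linarith) hfy).le hy : ((f x + 1) / f y) • y ∈ C)
    rw [map_smul, smul_eq_mul, div_mul_cancel₀ _ hfy.ne'] at this
    linarith
  have hf0 : -f ≠ 0 := by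
    obtain ⟨a, ha⟩ := hC
    exact neg_ne_zero.2 fun h => (hf a ha).ne (by simp [h])
  have := hx (-f) hf0 hdual
  rw [neg_apply] at this
  linarith

def momentCone (n : ℕ) : PointedCone ℝ (Fin (n + 1) → ℝ) where
  carrier := {x | ∃ σ : Measure ℝ, IsFiniteMeasure σ ∧ σ {t | t < 0} = 0 ∧
    (∀ k ≤ n, Integrable (fun t => t ^ k) σ) ∧ x = fun k : Fin (n + 1) => ∫ t, t ^ (k : ℕ) ∂σ}
  add_mem' := by
    rintro x y ⟨σ, hσ, hσ0, hσi, rfl⟩ ⟨τ, hτ, hτ0, hτi, rfl⟩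
    refine ⟨σ + τ, inferInstance, by simp [hσ0, hτ0],
      fun k hk => (hσi k hk).add_measure (hτi k hk), funext fun k => ?_⟩
    have hk : (k : ℕ) ≤ n := Nat.lt_succ_iff.1 k.2
    rw [Pi.add_apply, integral_add_measure (hσi k hk) (hτi k hk)]
  zero_mem' := ⟨0, inferInstance, rfl, fun _ _ => integrable_zero_measure, by ext; simp⟩
  smul_mem' := by
    rintro ⟨c, hc⟩ x ⟨σ, hσ, hσ0, hσi, rfl⟩
    refine ⟨c.toNNReal • σ, inferInstance, by simp [hσ0],
      fun k hk => (hσi k hk).smul_measure_nnreal, funext fun k => ?_⟩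
    rw [integral_smul_nnreal_measure, NNReal.smul_def, Real.coe_toNNReal c hc]
    rfl

lemma mem_momentCone {n : ℕ} {x : Fin (n + 1) → ℝ} :
    x ∈ momentCone n ↔ ∃ σ : Measure ℝ, IsFiniteMeasure σ ∧ σ {t | t < 0} = 0 ∧
      (∀ k ≤ n, Integrable (fun t => t ^ k) σ) ∧
        x = fun k : Fin (n + 1) => ∫ t, t ^ (k : ℕ) ∂σ :=
  .rfl

lemma pow_mem_momentCone (n : ℕ) {t : ℝ} (ht : 0 ≤ t) :
    (fun k : Fin (n + 1) => t ^ (k : ℕ)) ∈ momentCone n :=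
  mem_momentCone.2 ⟨Measure.dirac t, inferInstance, by simp [ht],
    fun k _ => integrable_dirac (by simp), funext fun k => by simp⟩

/-- Positive weights at the nodes `0, 1, …, n` fill an open set, as the Vandermonde matrix of
distinct nodes is invertible. -/
lemma interior_momentCone_nonempty (n : ℕ) :
    (interior (momentCone n : Set (Fin (n + 1) → ℝ))).Nonempty := by
  set V := Matrix.vandermonde fun i : Fin (n + 1) => (i : ℝ)
  have hV : Function.Surjective (Matrix.vecMulLinear V) := by
    refine Matrix.vecMul_surjective_iff_isUnit.2 ((Matrix.isUnit_iff_isUnit_det V).2 ?_)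
    exact isUnit_iff_ne_zero.2 (Matrix.det_vandermonde_ne_zero_iff.2
      fun i j h => Fin.val_injective (by exact_mod_cast h))
  have hsub : Matrix.vecMulLinear V '' Set.univ.pi (fun _ => Set.Ioi 0) ⊆ momentCone n := by
    rintro _ ⟨w, hw, rfl⟩
    have hVw : Matrix.vecMulLinear V w = ∑ i, w i • fun k : Fin (n + 1) => (i : ℝ) ^ (k : ℕ) := by
      ext k
      simp [Matrix.vecMul, dotProduct, V, Matrix.vandermonde_apply]
    rw [hVw]
    exact Submodule.sum_mem _ fun i _ =>
      (momentCone n).smul_mem (hw i (Set.mem_univ i)).le (pow_mem_momentCone n (Nat.cast_nonneg _))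
  exact ⟨_, interior_maximal hsub ((Matrix.vecMulLinear V).isOpenMap_of_finiteDimensional hV _
    (isOpen_set_pi Set.finite_univ fun _ _ => isOpen_Ioi)) ⟨fun _ => 1, fun _ _ => Set.mem_Ioi.2 one_pos, rfl⟩⟩

lemma exists_momentFunctional_eq {n : ℕ} {f : (Fin (n + 1) → ℝ) →ₗ[ℝ] ℝ} (hf : f ≠ 0) :
    ∃ q : ℝ[X], q ≠ 0 ∧ q.natDegree ≤ n ∧
      ∀ s : ℕ → ℝ, f (fun k => s k) = momentFunctional s q := by
  set c : Fin (n + 1) → ℝ := fun i => f fun j => if i = j then 1 else 0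
  set q := (degreeLTEquiv ℝ (n + 1)).symm c
  have hc : degreeLTEquiv ℝ (n + 1) ⟨q, q.2⟩ = c := (degreeLTEquiv ℝ (n + 1)).apply_symm_apply c
  have hq0 : (q : ℝ[X]) ≠ 0 := by
    intro h
    refine hf (LinearMap.ext fun x => ?_)
    have hc0 : c = 0 := by rw [← hc]; simp [h]
    rw [LinearMap.pi_apply_eq_sum_univ f x, LinearMap.zero_apply]
    exact Finset.sum_eq_zero fun i _ => by
      rw [show (f fun j => if i = j then 1 else 0) = 0 from congrFun hc0 i, smul_zero]
  refine ⟨q, hq0, ?_, fun s => ?_⟩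
  · rw [← Nat.lt_succ_iff, natDegree_lt_iff_degree_lt hq0]
    exact mem_degreeLT.1 q.2
  · rw [momentFunctional_eq_sum_degreeLTEquiv s q.2, hc, LinearMap.pi_apply_eq_sum_univ f]
    simp [c, mul_comm]

theorem mem_momentCone_of_posDef {n : ℕ} {p : ℕ → ℝ} (h₀ : (hankel p 0 (n / 2)).PosDef)
    (h₁ : (hankel p 1 ((n - 1) / 2)).PosDef) : (fun k : Fin (n + 1) => p k) ∈ momentCone n := by
  refine interior_subset ((momentCone n).mem_interior_of_pos_on_dual
    (interior_momentCone_nonempty n) fun f hf0 hfC => ?_)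
  obtain ⟨q, hq0, hqn, hfq⟩ := exists_momentFunctional_eq (f := f.toLinearMap)
    (by rwa [Ne, ← ContinuousLinearMap.toLinearMap_zero, ContinuousLinearMap.coe_inj])
  rw [← ContinuousLinearMap.coe_coe, hfq]
  refine momentFunctional_pos_of_nonneg h₀ h₁ hq0 hqn fun t ht => ?_
  rw [eval_eq_momentFunctional, ← hfq]
  exact hfC _ (pow_mem_momentCone n ht)

namespace DSym

theorem stmt8_general (n : ℕ) (p : ℕ → ℝ)
    (h0 : Matrix.PosDef (Matrix.of fun k l : Fin (n / 2 + 1) => p ((k : ℕ) + (l : ℕ))))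
    (h1 : Matrix.PosDef
      (Matrix.of fun k l : Fin ((n - 1) / 2 + 1) => p ((k : ℕ) + (l : ℕ) + 1))) :
    IsStrictMomentSolution n p := by
  obtain ⟨σ, hσ, hσ0, hσi, hσp⟩ := mem_momentCone.1 (mem_momentCone_of_posDef h0 h1)
  exact ⟨σ, hσ, hσ0, hσi, fun k hk => congrFun hσp ⟨k, Nat.lt_succ_of_le hk⟩⟩

theorem stmt8 (n : ℕ) (hn : 1 ≤ n) (p : ℕ → ℝ)
    (h0 : Matrix.PosDef (Matrix.of fun k l : Fin (n / 2 + 1) => p ((k : ℕ) + (l : ℕ))))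
    (h1 : Matrix.PosDef
      (Matrix.of fun k l : Fin ((n - 1) / 2 + 1) => p ((k : ℕ) + (l : ℕ) + 1))) :
    IsStrictMomentSolution n p :=
  stmt8_general n p h0 h1

end DSym
end

section
/- Let N = 2m with m ≥ 1. A diagonal restricted Dicke state ρ = Σ_{k=0}^{N(d−1)} p_k |R_{N,d;k}⟩⟨R_{N,d;k}| (p_k ≥ 0) is m-PPT if and only if the Hankel matrices (p_{i+j})_{i,j=0}^{m(d−1)} and (p_{i+j+1})_{i,j=0}^{m(d−1)−1} are positive semidefinite. -/
open scoped BigOperators ComplexConjugate ComplexOrder Matrix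
/-!
Write `a(i)` and `b(i)` for the sums of the first and of the last `m` digits of a basis index
`i`, and `M = m(d-1)`. The entry of `Γ_m(ρ)` at `(i, j)` is `p (a(i) + b(j))` when
`a(i) - b(i) = a(j) - b(j)` and `0` otherwise, so it only depends on the pairs
`(a, b) ∈ [0, M]²`, all of which occur: `Γ_m(ρ)` is positive semidefinite iff the matrix
`reducedGamma M p` on these pairs is. That matrix is block diagonal along the diagonals
`a - b = s`. The block `s = 0` is the Hankel matrix `(p (k + l))`, the block `s = -1` is
`(p (k + l + 1))`, and every other block is a principal submatrix of one of these two, according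
to the parity of `s`; so `reducedGamma M p` is the Hadamard product of the 0/1 mask of equal
diagonals with a reindexing of the block sum of the two Hankel matrices, and the Schur product
theorem gives the converse.
-/

namespace Matrix

theorem posSemidef_submatrix_iff_of_surjective {m n R : Type*} [Ring R] [PartialOrder R]
    [StarRing R] {A : Matrix n n R} {e : m → n} (he : Function.Surjective e) :
    (A.submatrix e e).PosSemidef ↔ A.PosSemidef := by
  refine ⟨fun h => ?_, fun h => h.submatrix e⟩
  have hA : A = (A.submatrix e e).submatrix (Function.surjInv he) (Function.surjInv he) := by
    ext i j
    simp [Function.surjInv_eq he]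
  exact hA ▸ h.submatrix _

theorem PosSemidef.fromBlocks_zero {m n 𝕜 : Type*} [Fintype m] [Fintype n] [RCLike 𝕜]
    {A : Matrix m m 𝕜} {D : Matrix n n 𝕜} (hA : A.PosSemidef) (hD : D.PosSemidef) :
    (fromBlocks A 0 0 D).PosSemidef := by
  refine .of_dotProduct_mulVec_nonneg (hA.isHermitian.fromBlocks (by simp) hD.isHermitian)
    fun x => ?_
  rw [← Sum.elim_comp_inl_inr x]
  simpa [fromBlocks_mulVec, dotProduct, Fintype.sum_sum_type] using
    add_nonneg (hA.dotProduct_mulVec_nonneg (x ∘ Sum.inl))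
      (hD.dotProduct_mulVec_nonneg (x ∘ Sum.inr))

theorem posSemidef_map_ofReal_iff {n 𝕜 : Type*} [Fintype n] [DecidableEq n] [RCLike 𝕜]
    {A : Matrix n n ℝ} : (A.map ((↑) : ℝ → 𝕜)).PosSemidef ↔ A.PosSemidef := by
  constructor
  · intro h
    refine .of_dotProduct_mulVec_nonneg ?_ fun x => ?_
    · ext i j
      simpa using congrFun₂ h.isHermitian i j
    · have hx := h.dotProduct_mulVec_nonneg (fun i => (x i : 𝕜))
      have hcast : star (fun i => (x i : 𝕜)) ⬝ᵥ (A.map ((↑) : ℝ → 𝕜) *ᵥ fun i => (x i : 𝕜))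
          = ((star x ⬝ᵥ (A *ᵥ x) : ℝ) : 𝕜) := by
        simp [dotProduct, mulVec]
      rwa [hcast, RCLike.ofReal_nonneg] at hx
  · intro h
    open scoped MatrixOrder in
    obtain ⟨B, rfl⟩ : ∃ B : Matrix n n ℝ, A = Bᴴ * B :=
      CStarAlgebra.nonneg_iff_eq_star_mul_self.mp h.nonneg
    have hB : (Bᴴ * B).map ((↑) : ℝ → 𝕜) = (B.map ((↑) : ℝ → 𝕜))ᴴ * B.map ((↑) : ℝ → 𝕜) := by
      ext i j
      simp [mul_apply]
    exact hB ▸ posSemidef_conjTranspose_mul_self _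

end Matrix

namespace DSym
open Finset Matrix

def hankel (n : ℕ) (p : ℕ → ℝ) : Matrix (Fin n) (Fin n) ℝ :=
  of fun k l => p (k + l)

/-- The entry of `Γ_m(ρ)` between basis indices whose first and last digit sums are `P` and `Q`. -/
def reducedGamma (M : ℕ) (p : ℕ → ℝ) :
    Matrix (Fin (M + 1) × Fin (M + 1)) (Fin (M + 1) × Fin (M + 1)) ℝ :=
  of fun P Q => if (Q.1 + P.2 : ℕ) = P.1 + Q.2 then p (P.1 + Q.2) else 0

theorem hankel_eq_submatrix_reducedGamma (M : ℕ) (p : ℕ → ℝ) :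
    hankel (M + 1) p = (reducedGamma M p).submatrix (fun u => (u, u)) (fun u => (u, u)) := by
  ext u v
  simp [hankel, reducedGamma, add_comm]

theorem hankel_succ_eq_submatrix_reducedGamma (M : ℕ) (p : ℕ → ℝ) :
    hankel M (fun k => p (k + 1)) =
      (reducedGamma M p).submatrix (fun u => (u.castSucc, u.succ))
        (fun u => (u.castSucc, u.succ)) := by
  ext u v
  simp [hankel, reducedGamma, add_assoc, add_left_comm]

/-- On the diagonal `P.1 - P.2 = s` the entry `p (P.1 + Q.2)` equals `p (k + l)` (`s` even) or
`p (k + l + 1)` (`s` odd), where `k = ⌊(P.1 + P.2) / 2⌋` and `l = ⌊(Q.1 + Q.2) / 2⌋`. -/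
def hankelBlockIndex {M : ℕ} (P : Fin (M + 1) × Fin (M + 1)) : Fin (M + 1) ⊕ Fin M :=
  if h : (P.1 + P.2 : ℕ) % 2 = 0 then .inl ⟨(P.1 + P.2 : ℕ) / 2, by omega⟩
  else .inr ⟨(P.1 + P.2 : ℕ) / 2, by omega⟩

theorem reducedGamma_eq_hadamard (M : ℕ) (p : ℕ → ℝ) :
    reducedGamma M p =
      (1 : Matrix ℤ ℤ ℝ).submatrix (fun P => (P.1 - P.2 : ℤ)) (fun P => (P.1 - P.2 : ℤ)) ⊙
        (fromBlocks (hankel (M + 1) p) 0 0 (hankel M (fun k => p (k + 1)))).submatrix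
          hankelBlockIndex hankelBlockIndex := by
  ext P Q
  simp only [reducedGamma, hadamard, submatrix_apply, one_apply, of_apply]
  by_cases hPQ : (Q.1 + P.2 : ℕ) = P.1 + Q.2
  · rw [if_pos hPQ, if_pos (by omega), one_mul]
    unfold hankelBlockIndex
    split_ifs <;> first
      | omega
      | simp only [fromBlocks_apply₁₁, fromBlocks_apply₂₂, hankel, of_apply]; congr 1; omega
  · rw [if_neg hPQ, if_neg (by omega), zero_mul]

theorem reducedGamma_posSemidef_iff (M : ℕ) (p : ℕ → ℝ) :
    (reducedGamma M p).PosSemidef ↔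
      (hankel (M + 1) p).PosSemidef ∧ (hankel M (fun k => p (k + 1))).PosSemidef := by
  refine ⟨fun h => ⟨?_, ?_⟩, fun ⟨h₀, h₁⟩ => ?_⟩
  · rw [hankel_eq_submatrix_reducedGamma]
    exact h.submatrix _
  · rw [hankel_succ_eq_submatrix_reducedGamma]
    exact h.submatrix _
  · rw [reducedGamma_eq_hadamard]
    exact (PosSemidef.one.submatrix _).hadamard ((h₀.fromBlocks_zero h₁).submatrix _)

section DigitSums

variable {d N : ℕ}

theorem sum_val_le {ι : Type*} (S : Finset ι) (i : ι → Fin d) :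
    ∑ k ∈ S, (i k : ℕ) ≤ #S * (d - 1) :=
  sum_le_card_nsmul S _ _ fun k _ => Nat.le_sub_one_of_lt (i k).isLt

theorem exists_sum_val_eq {ι : Type*} [DecidableEq ι] (hd : 0 < d) (S : Finset ι) {a : ℕ}
    (ha : a ≤ #S * (d - 1)) : ∃ i : ι → Fin d, ∑ k ∈ S, (i k : ℕ) = a := by
  induction S using Finset.induction_on generalizing a with
  | empty => exact ⟨fun _ => ⟨0, hd⟩, by simp_all⟩
  | insert k S hk ih =>
    rw [card_insert_of_notMem hk, add_one_mul] at ha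
    obtain ⟨i, hi⟩ := ih (a := a - min a (d - 1)) (by omega)
    refine ⟨Function.update i k ⟨min a (d - 1), by omega⟩, ?_⟩
    rw [sum_insert hk, Function.update_self, Fin.val_mk,
      sum_congr rfl fun j hj => by rw [Function.update_of_ne (ne_of_mem_of_not_mem hj hk)], hi]
    omega

theorem card_filter_le_val (m : ℕ) : #{j : Fin N | m ≤ (j : ℕ)} = N - m := by
  have := card_filter_add_card_filter_not (s := univ) (fun j : Fin N => (j : ℕ) < m)
  simp only [not_lt, Fin.card_filter_val_lt, card_univ, Fintype.card_fin] at this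
  omega

theorem wsum_le (i : Idx d N) : wsum i ≤ N * (d - 1) := by
  simpa [wsum] using sum_val_le univ i

theorem wsumFirst_le (m : ℕ) (i : Idx d N) : wsumFirst m i ≤ m * (d - 1) :=
  (sum_val_le _ i).trans (Nat.mul_le_mul_right _ (by simp [Fin.card_filter_val_lt]))

theorem wsumLast_le (m : ℕ) (i : Idx d N) : wsumLast m i ≤ (N - m) * (d - 1) :=
  (sum_val_le _ i).trans_eq (by rw [card_filter_le_val])

theorem exists_wsumFirst_wsumLast_eq (hd : 0 < d) {m a b : ℕ} (hm : m ≤ N)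
    (ha : a ≤ m * (d - 1)) (hb : b ≤ (N - m) * (d - 1)) :
    ∃ i : Idx d N, wsumFirst m i = a ∧ wsumLast m i = b := by
  obtain ⟨f, hf⟩ := exists_sum_val_eq hd {j : Fin N | (j : ℕ) < m} (a := a)
    (by rwa [Fin.card_filter_val_lt, min_eq_right hm])
  obtain ⟨g, hg⟩ := exists_sum_val_eq hd {j : Fin N | m ≤ (j : ℕ)} (a := b)
    (by rwa [card_filter_le_val])
  refine ⟨fun j => if (j : ℕ) < m then f j else g j, ?_, ?_⟩
  · rw [← hf, wsumFirst]
    exact sum_congr rfl fun j hj => by simp_all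
  · rw [← hg, wsumLast]
    exact sum_congr rfl fun j hj => by simp_all [not_lt.mpr]

theorem wsum_ite_lt (m : ℕ) (x y : Idx d N) :
    wsum (fun k => if (k : ℕ) < m then x k else y k) = wsumFirst m x + wsumLast m y := by
  rw [wsum, ← sum_filter_add_sum_filter_not univ (fun k : Fin N => (k : ℕ) < m)]
  simp only [not_lt, wsumFirst, wsumLast]
  congr 1 <;> refine sum_congr rfl fun k hk => ?_ <;> simp at hk
  · simp [hk]
  · simp [hk.not_gt]

end DigitSums

section PartialTranspose

variable {d N : ℕ}

theorem dickeDiag_apply (p : ℕ → ℝ) (x y : Idx d N) :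
    dickeDiag d N p x y = if wsum x = wsum y then (p (wsum x) : ℂ) else 0 := by
  simp only [dickeDiag, RProj, Rvec, Complex.coe_smul, Matrix.sum_apply, Matrix.smul_apply,
    vecMulVec_apply, Pi.star_apply, RCLike.star_def, MonoidWithZeroHom.map_ite_one_zero, mul_ite,
    mul_one, mul_zero, ← ite_and, smul_ite, Complex.real_smul, smul_zero]
  split_ifs with h
  · rw [h]
    simp [Nat.lt_succ_of_le (wsum_le y)]
  · exact sum_eq_zero fun k _ => if_neg fun hk => h (hk.2.trans hk.1.symm)

theorem Gamma_dickeDiag_apply (m : ℕ) (p : ℕ → ℝ) (i j : Idx d N) :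
    Gamma m (dickeDiag d N p) i j =
      if wsumFirst m j + wsumLast m i = wsumFirst m i + wsumLast m j then
        (p (wsumFirst m i + wsumLast m j) : ℂ)
      else 0 := by
  rw [Gamma, of_apply, dickeDiag_apply, wsum_ite_lt, wsum_ite_lt]
  split_ifs with h
  · rw [h]
  · rfl

end PartialTranspose

section

variable {d m : ℕ}

def wsumPair (m : ℕ) (i : Idx d (2 * m)) : Fin (m * (d - 1) + 1) × Fin (m * (d - 1) + 1) :=
  (⟨wsumFirst m i, Nat.lt_succ_of_le (wsumFirst_le m i)⟩,
    ⟨wsumLast m i, Nat.lt_succ_of_le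
      ((wsumLast_le m i).trans_eq (by rw [two_mul, Nat.add_sub_cancel]))⟩)

theorem wsumPair_surjective (hd : 0 < d) : Function.Surjective (wsumPair (d := d) m) := by
  rintro ⟨a, b⟩
  obtain ⟨i, ha, hb⟩ := exists_wsumFirst_wsumLast_eq hd (N := 2 * m) (a := a) (b := b)
    (by omega) (Nat.le_of_lt_succ a.isLt)
    (by rw [two_mul, Nat.add_sub_cancel]; exact Nat.le_of_lt_succ b.isLt)
  exact ⟨i, Prod.ext (Fin.ext ha) (Fin.ext hb)⟩

theorem Gamma_dickeDiag_eq_submatrix (p : ℕ → ℝ) :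
    Gamma m (dickeDiag d (2 * m) p) =
      ((reducedGamma (m * (d - 1)) p).map ((↑) : ℝ → ℂ)).submatrix (wsumPair m) (wsumPair m) := by
  ext i j
  rw [Gamma_dickeDiag_apply]
  simp only [reducedGamma, wsumPair, submatrix_apply, map_apply, of_apply]
  split_ifs <;> simp

end

theorem stmt9_general (d m : ℕ) (hd : 2 ≤ d) (p : ℕ → ℝ) :
    (Gamma m (dickeDiag d (2 * m) p)).PosSemidef ↔
      (Matrix.PosSemidef
        (Matrix.of fun k l : Fin (m * (d - 1) + 1) => p ((k : ℕ) + (l : ℕ)))) ∧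
      (Matrix.PosSemidef
        (Matrix.of fun k l : Fin (m * (d - 1)) => p ((k : ℕ) + (l : ℕ) + 1))) := by
  rw [Gamma_dickeDiag_eq_submatrix,
    posSemidef_submatrix_iff_of_surjective (wsumPair_surjective (by omega))]
  exact posSemidef_map_ofReal_iff.trans (reducedGamma_posSemidef_iff _ p)

theorem stmt9 (d m : ℕ) (hd : 2 ≤ d) (hm : 1 ≤ m) (p : ℕ → ℝ)
    (hp : ∀ k ≤ 2 * m * (d - 1), 0 ≤ p k) :
    (Gamma m (dickeDiag d (2 * m) p)).PosSemidef ↔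
      (Matrix.PosSemidef
        (Matrix.of fun k l : Fin (m * (d - 1) + 1) => p ((k : ℕ) + (l : ℕ)))) ∧
      (Matrix.PosSemidef
        (Matrix.of fun k l : Fin (m * (d - 1)) => p ((k : ℕ) + (l : ℕ) + 1))) :=
  stmt9_general d m hd p

end DSym
end
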